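/- Assume ρ ∉ 𝒫 and let η ∈ ℝ_{≥0}^Q. There exists a diagonal Q×Q matrix D with D_{qq} > 0 for every q such that, under the MaxWeight policy with weight matrix D, lim_{t→∞} X(t)/t = η, if and only if both of the following hold: (1) η = (ρ − Σ_{m=1}^N α_m S_m)⁺ for some α_m ≥ 0 with Σ_{m=1}^N α_m = 1; and (2) there exists v ∈ ℝ_{≥0}^Q with v_q = 0 if and only if η_q = 0, such that for every m with α_m > 0 one has ⟨v, S_m⟩ ≥ ⟨v, S_k⟩ for every k ∈ {1,…,N}. -/

import Mathlib

/-!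
Sufficiency is a Lyapunov argument. Let `E(t) = Σ_{s<t} A(s) - tρ`, which is `o(t)`, and
`Y(t) = X(t) - tη - E(t)`, whose increments `ρ - η - D(t)` are bounded. With
`d_q = v_q / η_q` (and `d_q = 1` where `η_q = 0`) the weighted square `L = Σ_q d_q Y_q²` has
drift `2 Σ_q d_q (X_q - tη_q)(ρ_q - η_q - D_q) + o(t)`, and the main term is bounded: splitting
`ρ - η - D = (ρ - η - μ) + (μ - S(t)) + (S(t) - D)` with `μ = Σ_m α_m S_m`, the first part is
nonpositive because `η = (ρ - μ)⁺`, the second because MaxWeight beats the convex combination `μ`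
against `dX` while `μ` beats `S(t)` against `v = dη`, and the third is the idle service of a
nearly empty queue. Hence `L(t) = o(t²)` and `X(t)/t → η`.

Necessity: run MaxWeight with the given weights and let `α` be a limit point of the empirical
frequencies of the chosen schedules. Long-run departures are `ρ - η`, never more than `μ`, and
equal to `μ` on the queues with `η_q > 0`, which eventually never empty; so `η = (ρ - μ)⁺`.
A schedule with `α_m > 0` is chosen infinitely often, each time maximising `⟨S_k, dX(t)/t⟩`,
and in the limit it maximises `⟨S_k, dη⟩`, so `v = dη` works.
-/

open Finset Filter Topology Asymptotics

def stabRegion {Q N : ℕ} (S : Fin N → Fin Q → ℝ) : Set (Fin Q → ℝ) :=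
  {r | (∀ q, 0 ≤ r q) ∧ ∃ α : Fin N → ℝ, (∀ i, 0 ≤ α i) ∧ (∑ i, α i) = 1 ∧
    ∀ q, r q ≤ ∑ i, α i * S i q}

lemma tendsto_div_natCast_iff_isLittleO {u : ℕ → ℝ} {c : ℝ} :
    Tendsto (fun t : ℕ => u t / t) atTop (𝓝 c) ↔
      (fun t : ℕ => u t - t * c) =o[atTop] (fun t : ℕ => (t : ℝ)) := by
  rw [isLittleO_iff_tendsto' ((eventually_ne_atTop 0).mono fun t ht h => by simp_all),
    ← tendsto_sub_nhds_zero_iff]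
  refine tendsto_congr' ?_
  filter_upwards [eventually_ne_atTop 0] with t ht
  field_simp

lemma sum_range_two_mul_add_one (n : ℕ) : ∑ i ∈ range n, (2 * (i : ℝ) + 1) = (n : ℝ) ^ 2 := by
  induction n with
  | zero => simp
  | succ n ih => rw [sum_range_succ, ih]; push_cast; ring

lemma isLittleO_sq_of_succ_le {L g : ℕ → ℝ} (hL : 0 ≤ L) (hstep : ∀ t, L (t + 1) ≤ L t + g t)
    (hg : g =o[atTop] (fun t : ℕ => (t : ℝ))) :
    L =o[atTop] (fun t : ℕ => (t : ℝ) ^ 2) := by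
  have hsq : Tendsto (fun T : ℕ => (T : ℝ) ^ 2) atTop atTop :=
    (tendsto_pow_atTop two_ne_zero).comp tendsto_natCast_atTop_atTop
  have hsum : (fun T => ∑ t ∈ range T, g t) =o[atTop] (fun T : ℕ => (T : ℝ) ^ 2) := by
    have hg' : g =o[atTop] (fun t : ℕ => 2 * (t : ℝ) + 1) :=
      hg.trans_le fun t => by
        rw [Real.norm_natCast, Real.norm_of_nonneg (by positivity)]; linarith
    have hdiv : Tendsto (fun n => ∑ i ∈ range n, (2 * (i : ℝ) + 1)) atTop atTop := by
      simpa only [sum_range_two_mul_add_one] using hsq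
    simpa only [sum_range_two_mul_add_one] using hg'.sum_range (fun t => by positivity) hdiv
  have hbound : ∀ T, L T ≤ L 0 + ∑ t ∈ range T, g t := by
    intro T
    induction T with
    | zero => simp
    | succ T ih => rw [sum_range_succ]; linarith [hstep T]
  have hconst : (fun _ : ℕ => L 0) =o[atTop] (fun T : ℕ => (T : ℝ) ^ 2) :=
    isLittleO_const_left.2 <| Or.inr <| tendsto_norm_atTop_atTop.comp hsq
  refine IsBigO.trans_isLittleO (IsBigO.of_bound' (Eventually.of_forall fun T => ?_))
    (hconst.add hsum)
  rw [Real.norm_of_nonneg (hL T), Real.norm_of_nonneg (le_trans (hL T) (hbound T))]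
  exact hbound T

lemma tendsto_sum_range_div_sub_of_eventuallyEq {u v : ℕ → ℝ} (h : u =ᶠ[atTop] v) :
    Tendsto (fun T : ℕ => (∑ t ∈ range T, u t) / T - (∑ t ∈ range T, v t) / T) atTop (𝓝 0) := by
  have h0 : Tendsto (fun t => u t - v t) atTop (𝓝 0) :=
    tendsto_const_nhds.congr' (h.mono fun t ht => (sub_eq_zero.2 ht).symm)
  refine h0.cesaro.congr fun T => ?_
  rw [sum_sub_distrib]
  ring

lemma mul_sub_min_le_sq {s x y : ℝ} (hx : 0 ≤ x) (hy : y ≤ x) : y * (s - min s x) ≤ s ^ 2 := by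
  rcases le_total s x with h | h
  · simp [min_eq_left h, sq_nonneg]
  · rw [min_eq_right h]; nlinarith

variable {ι κ : Type*}

lemma isLittleO_of_weighted_sq_succ_le [Fintype ι] {Y : ℕ → ι → ℝ} {d : ι → ℝ} {g : ℕ → ℝ}
    (hd : ∀ q, 0 < d q)
    (hstep : ∀ t, ∑ q, d q * Y (t + 1) q ^ 2 ≤ ∑ q, d q * Y t q ^ 2 + g t)
    (hg : g =o[atTop] (fun t : ℕ => (t : ℝ))) (q : ι) :
    (fun t => Y t q) =o[atTop] (fun t : ℕ => (t : ℝ)) := by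
  have hL := isLittleO_sq_of_succ_le
    (fun t => sum_nonneg fun r _ => mul_nonneg (hd r).le (sq_nonneg (Y t r))) hstep hg
  refine IsLittleO.of_pow (n := 2) (IsBigO.trans_isLittleO ?_ hL) two_ne_zero
  refine IsBigO.of_bound (d q)⁻¹ (Eventually.of_forall fun t => ?_)
  have hle : d q * Y t q ^ 2 ≤ ∑ r, d r * Y t r ^ 2 :=
    single_le_sum (f := fun r => d r * Y t r ^ 2)
      (fun r _ => mul_nonneg (hd r).le (sq_nonneg _)) (mem_univ q)
  rw [Pi.pow_apply, Real.norm_of_nonneg (sq_nonneg _),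
    Real.norm_of_nonneg (le_trans (by positivity [hd q]) hle), ← div_eq_inv_mul,
    le_div_iff₀ (hd q)]
  linarith

lemma exists_pos_mul_eq_of_eq_zero_iff {v η : ι → ℝ} (hv : ∀ q, 0 ≤ v q) (hη : ∀ q, 0 ≤ η q)
    (h : ∀ q, v q = 0 ↔ η q = 0) : ∃ d : ι → ℝ, (∀ q, 0 < d q) ∧ v = fun q => d q * η q := by
  refine ⟨fun q => if η q = 0 then 1 else v q / η q, fun q => ?_, funext fun q => ?_⟩
  · dsimp only
    split_ifs with hq
    · exact one_pos
    · exact div_pos ((hv q).lt_of_ne (Ne.symm (mt (h q).1 hq))) ((hη q).lt_of_ne (Ne.symm hq))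
  · dsimp only
    split_ifs with hq
    · rw [hq, (h q).2 hq, mul_zero]
    · exact (div_mul_cancel₀ _ hq).symm

section ConvexCombination

variable [Fintype κ] {α : κ → ℝ}

lemma sum_mul_le_of_forall_pos {f : κ → ℝ} {c : ℝ} (hα0 : ∀ m, 0 ≤ α m) (hα1 : ∑ m, α m = 1)
    (h : ∀ m, 0 < α m → f m ≤ c) : ∑ m, α m * f m ≤ c := by
  calc ∑ m, α m * f m ≤ ∑ m, α m * c := by
        refine sum_le_sum fun m _ => ?_
        rcases (hα0 m).eq_or_lt with hm | hm
        · simp [← hm]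
        · exact mul_le_mul_of_nonneg_left (h m hm) hm.le
    _ = c := by rw [← sum_mul, hα1, one_mul]

lemma le_sum_mul_of_forall_pos {f : κ → ℝ} {c : ℝ} (hα0 : ∀ m, 0 ≤ α m) (hα1 : ∑ m, α m = 1)
    (h : ∀ m, 0 < α m → c ≤ f m) : c ≤ ∑ m, α m * f m := by
  have := sum_mul_le_of_forall_pos (f := fun m => -f m) (c := -c) hα0 hα1
    fun m hm => neg_le_neg (h m hm)
  simpa only [mul_neg, sum_neg_distrib, neg_le_neg_iff] using this

lemma sum_sum_mul_mul_eq [Fintype ι] (α : κ → ℝ) (S : κ → ι → ℝ) (c : ι → ℝ) :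
    ∑ q, (∑ m, α m * S m q) * c q = ∑ m, α m * ∑ q, S m q * c q := by
  simp_rw [sum_mul, mul_sum, mul_assoc]
  exact sum_comm

lemma maxWeight_drift_le [Fintype ι] {S : κ → ι → ℝ} {ρ η d x : ι → ℝ} {τ : ℝ} {j : κ}
    (hα0 : ∀ m, 0 ≤ α m) (hα1 : ∑ m, α m = 1)
    (hη : ∀ q, η q = max (ρ q - ∑ m, α m * S m q) 0)
    (hαmax : ∀ m, 0 < α m → ∀ k, ∑ q, d q * η q * S k q ≤ ∑ q, d q * η q * S m q)
    (hd : ∀ q, 0 ≤ d q) (hx : ∀ q, 0 ≤ x q) (hτ : 0 ≤ τ)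
    (hj : ∀ k, ∑ q, S k q * (d q * x q) ≤ ∑ q, S j q * (d q * x q)) :
    ∑ q, d q * (x q - τ * η q) * (ρ q - η q - min (S j q) (x q)) ≤ ∑ q, d q * S j q ^ 2 := by
  set μ := fun q => ∑ m, α m * S m q
  have hfluid : ∀ q, d q * (x q - τ * η q) * (ρ q - η q - μ q) ≤ 0 := by
    intro q
    rcases le_total (ρ q - μ q) 0 with h | h
    · have hη0 : η q = 0 := by rw [hη q, max_eq_right h]
      rw [hη0, mul_zero, sub_zero, sub_zero]
      exact mul_nonpos_of_nonneg_of_nonpos (mul_nonneg (hd q) (hx q)) h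
    · rw [hη q, max_eq_left h, sub_sub_cancel, sub_self, mul_zero]
  have hdx : ∑ q, μ q * (d q * x q) ≤ ∑ q, S j q * (d q * x q) := by
    rw [sum_sum_mul_mul_eq]
    exact sum_mul_le_of_forall_pos hα0 hα1 fun k _ => hj k
  have hdη : ∑ q, S j q * (d q * η q) ≤ ∑ q, μ q * (d q * η q) := by
    have hcomm : ∀ k, ∑ q, S k q * (d q * η q) = ∑ q, d q * η q * S k q :=
      fun k => sum_congr rfl fun q _ => mul_comm _ _
    rw [sum_sum_mul_mul_eq, hcomm]
    exact le_sum_mul_of_forall_pos hα0 hα1 fun m hm => (hαmax m hm j).trans_eq (hcomm m).symm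
  have hmw : ∑ q, d q * (x q - τ * η q) * (μ q - S j q) ≤ 0 := by
    have hsplit : ∑ q, d q * (x q - τ * η q) * (μ q - S j q) =
        (∑ q, μ q * (d q * x q) - ∑ q, S j q * (d q * x q)) -
          τ * (∑ q, μ q * (d q * η q) - ∑ q, S j q * (d q * η q)) := by
      simp only [← sum_sub_distrib, mul_sum]
      exact sum_congr rfl fun q _ => by ring
    rw [hsplit]
    nlinarith
  have hidle : ∀ q, d q * (x q - τ * η q) * (S j q - min (S j q) (x q)) ≤ d q * S j q ^ 2 := by
    intro q
    have hτη : 0 ≤ τ * η q := mul_nonneg hτ ((hη q).trans_ge (le_max_right _ _))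
    rw [mul_assoc]
    exact mul_le_mul_of_nonneg_left (mul_sub_min_le_sq (hx q) (by linarith)) (hd q)
  calc ∑ q, d q * (x q - τ * η q) * (ρ q - η q - min (S j q) (x q))
      = ∑ q, d q * (x q - τ * η q) * (ρ q - η q - μ q) +
          ∑ q, d q * (x q - τ * η q) * (μ q - S j q) +
          ∑ q, d q * (x q - τ * η q) * (S j q - min (S j q) (x q)) := by
        simp only [← sum_add_distrib]
        exact sum_congr rfl fun q _ => by ring
    _ ≤ 0 + 0 + ∑ q, d q * S j q ^ 2 :=
        add_le_add (add_le_add (sum_nonpos fun q _ => hfluid q) hmw)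
          (sum_le_sum fun q _ => hidle q)
    _ = ∑ q, d q * S j q ^ 2 := by rw [zero_add, zero_add]

end ConvexCombination

def IsQueueTrajectory (A : ℕ → ι → ℝ) (S : κ → ι → ℝ) (σ : ℕ → κ) (X : ℕ → ι → ℝ) : Prop :=
  (∀ q, X 0 q = 0) ∧ ∀ t q, X (t + 1) q = X t q + A t q - min (S (σ t) q) (X t q)

def IsMaxWeight [Fintype ι] (S : κ → ι → ℝ) (d : ι → ℝ) (σ : ℕ → κ) (X : ℕ → ι → ℝ) : Prop :=
  ∀ t j, ∑ q, S j q * (d q * X t q) ≤ ∑ q, S (σ t) q * (d q * X t q)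

def arrivalExcess (A : ℕ → ι → ℝ) (ρ : ι → ℝ) (t : ℕ) (q : ι) : ℝ :=
  ∑ s ∈ range t, A s q - t * ρ q

lemma exists_isQueueTrajectory_isMaxWeight [Fintype ι] [Fintype κ] [Nonempty κ]
    (A : ℕ → ι → ℝ) (S : κ → ι → ℝ) (d : ι → ℝ) :
    ∃ σ X, IsQueueTrajectory A S σ X ∧ IsMaxWeight S d σ X := by
  choose pick hpick using fun x : ι → ℝ =>
    exists_max_image univ (fun k => ∑ q, S k q * (d q * x q)) univ_nonempty
  let X : ℕ → ι → ℝ := fun t => Nat.rec (fun _ => 0)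
    (fun t Xt q => Xt q + A t q - min (S (pick Xt) q) (Xt q)) t
  exact ⟨fun t => pick (X t), X, ⟨fun _ => rfl, fun _ _ => rfl⟩,
    fun t j => (hpick (X t)).2 j (mem_univ j)⟩

noncomputable def empiricalFreq [DecidableEq κ] (σ : ℕ → κ) (T : ℕ) (m : κ) : ℝ :=
  #{t ∈ range T | σ t = m} / T

section EmpiricalFreq

variable [DecidableEq κ] {σ : ℕ → κ}

lemma sum_empiricalFreq_mul [Fintype κ] (σ : ℕ → κ) (T : ℕ) (f : κ → ℝ) :
    ∑ m, empiricalFreq σ T m * f m = (∑ t ∈ range T, f (σ t)) / T := by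
  simp only [empiricalFreq, div_mul_eq_mul_div, ← sum_div]
  rw [← sum_fiberwise (range T) σ (fun t => f (σ t))]
  refine congrArg (· / _) (sum_congr rfl fun m _ => ?_)
  rw [sum_congr rfl fun t ht => by rw [(mem_filter.1 ht).2], sum_const, nsmul_eq_mul]

lemma empiricalFreq_mem_stdSimplex [Fintype κ] {T : ℕ} (hT : T ≠ 0) :
    empiricalFreq σ T ∈ stdSimplex ℝ κ := by
  refine ⟨fun m => by unfold empiricalFreq; positivity, ?_⟩
  simpa [hT] using sum_empiricalFreq_mul σ T 1

lemma exists_tendsto_empiricalFreq [Fintype κ] (σ : ℕ → κ) :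
    ∃ α ∈ stdSimplex ℝ κ, ∃ φ : ℕ → ℕ, StrictMono φ ∧
      Tendsto (fun k => empiricalFreq σ (φ k)) atTop (𝓝 α) :=
  (isCompact_stdSimplex ℝ κ).tendsto_subseq'
    ((eventually_ne_atTop 0).mono fun _ hT => empiricalFreq_mem_stdSimplex hT).frequently

lemma frequently_eq_of_tendsto_empiricalFreq {φ : ℕ → ℕ} (hφ : StrictMono φ) {m : κ} {c : ℝ}
    (h : Tendsto (fun k => empiricalFreq σ (φ k) m) atTop (𝓝 c)) (hc : 0 < c) :
    ∃ᶠ t in atTop, σ t = m := by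
  by_contra hfreq
  obtain ⟨t₀, ht₀⟩ := eventually_atTop.1 (not_frequently.1 hfreq)
  have hle : ∀ T, empiricalFreq σ T m ≤ t₀ / T := fun T => by
    refine div_le_div_of_nonneg_right ?_ T.cast_nonneg
    calc (#{t ∈ range T | σ t = m} : ℝ) ≤ #(range t₀) := by
          refine Nat.cast_le.2 (card_le_card fun t ht => ?_)
          simp only [mem_filter, mem_range] at ht ⊢
          by_contra h'
          exact ht₀ t (not_lt.1 h') ht.2
      _ = t₀ := by rw [card_range]
  have := le_of_tendsto_of_tendsto' h
    ((tendsto_const_div_atTop_nhds_zero_nat (t₀ : ℝ)).comp hφ.tendsto_atTop) fun k => hle (φ k)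
  linarith

end EmpiricalFreq

namespace IsQueueTrajectory

variable {A : ℕ → ι → ℝ} {S : κ → ι → ℝ} {σ : ℕ → κ} {X : ℕ → ι → ℝ}

lemma nonneg (h : IsQueueTrajectory A S σ X) (hA0 : ∀ t q, 0 ≤ A t q) (t : ℕ) (q : ι) :
    0 ≤ X t q := by
  induction t with
  | zero => rw [h.1 q]
  | succ t ih => rw [h.2 t q]; linarith [min_le_right (S (σ t) q) (X t q), hA0 t q]

lemma abs_min_le [Fintype κ] (h : IsQueueTrajectory A S σ X) (hA0 : ∀ t q, 0 ≤ A t q) (t : ℕ)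
    (q : ι) : |min (S (σ t) q) (X t q)| ≤ ∑ i, |S i q| := by
  have hS : |S (σ t) q| ≤ ∑ i, |S i q| :=
    single_le_sum (f := fun i => |S i q|) (fun i _ => abs_nonneg _) (mem_univ _)
  rw [abs_le] at hS ⊢
  exact ⟨le_min hS.1 (by linarith [h.nonneg hA0 t q]), (min_le_left _ _).trans hS.2⟩

lemma eq_sum_sub_sum (h : IsQueueTrajectory A S σ X) (T : ℕ) (q : ι) :
    X T q = ∑ t ∈ range T, A t q - ∑ t ∈ range T, min (S (σ t) q) (X t q) := by
  induction T with
  | zero => simp [h.1 q]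
  | succ T ih => rw [sum_range_succ, sum_range_succ, h.2 T q, ih]; ring

section Sufficiency

variable [Fintype ι] [Fintype κ] {d : ι → ℝ} {α : κ → ℝ} {ρ η : ι → ℝ}

lemma weighted_sq_succ_le (h : IsQueueTrajectory A S σ X) (hA0 : ∀ t q, 0 ≤ A t q)
    (hmw : IsMaxWeight S d σ X) (hα0 : ∀ m, 0 ≤ α m) (hα1 : ∑ m, α m = 1)
    (hη : ∀ q, η q = max (ρ q - ∑ m, α m * S m q) 0)
    (hαmax : ∀ m, 0 < α m → ∀ k, ∑ q, d q * η q * S k q ≤ ∑ q, d q * η q * S m q)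
    (hd : ∀ q, 0 ≤ d q) (t : ℕ) :
    ∑ q, d q * (X (t + 1) q - (t + 1 : ℕ) * η q - arrivalExcess A ρ (t + 1) q) ^ 2 ≤
      ∑ q, d q * (X t q - t * η q - arrivalExcess A ρ t q) ^ 2 +
        ∑ q, d q * (3 * (|ρ q - η q| + ∑ i, |S i q|) ^ 2 +
          2 * (|ρ q - η q| + ∑ i, |S i q|) * |arrivalExcess A ρ t q|) := by
  set K := fun q => |ρ q - η q| + ∑ i, |S i q|
  set E := fun q => arrivalExcess A ρ t q
  set Δ := fun q => ρ q - η q - min (S (σ t) q) (X t q)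
  have hΔ : ∀ q, |Δ q| ≤ K q := fun q =>
    (abs_sub _ _).trans (add_le_add le_rfl (h.abs_min_le hA0 t q))
  have hSK : ∀ q, S (σ t) q ^ 2 ≤ K q ^ 2 := by
    intro q
    have hS : |S (σ t) q| ≤ K q :=
      (single_le_sum (f := fun i => |S i q|) (fun i _ => abs_nonneg _) (mem_univ _)).trans
        (le_add_of_nonneg_left (abs_nonneg _))
    exact sq_le_sq.2 (hS.trans_eq (abs_of_nonneg ((abs_nonneg _).trans hS)).symm)
  have hstep : ∀ q, X (t + 1) q - (t + 1 : ℕ) * η q - arrivalExcess A ρ (t + 1) q =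
      (X t q - t * η q - E q) + Δ q := by
    intro q
    simp only [E, Δ, arrivalExcess, h.2 t q, sum_range_succ]
    push_cast
    ring
  have hnoise : ∀ q, d q * (Δ q ^ 2 - 2 * E q * Δ q) ≤ d q * (K q ^ 2 + 2 * K q * |E q|) := by
    intro q
    refine mul_le_mul_of_nonneg_left ?_ (hd q)
    have h1 : Δ q ^ 2 ≤ K q ^ 2 := sq_le_sq' (abs_le.1 (hΔ q)).1 (abs_le.1 (hΔ q)).2
    have h2 : -(E q * Δ q) ≤ K q * |E q| := by
      rw [mul_comm (K q)]
      exact (neg_le_abs _).trans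
        (by rw [abs_mul]; exact mul_le_mul_of_nonneg_left (hΔ q) (abs_nonneg _))
    linarith
  have hdrift :=
    maxWeight_drift_le hα0 hα1 hη hαmax hd (h.nonneg hA0 t) (Nat.cast_nonneg t) (hmw t)
  calc ∑ q, d q * (X (t + 1) q - (t + 1 : ℕ) * η q - arrivalExcess A ρ (t + 1) q) ^ 2
      = ∑ q, d q * (X t q - t * η q - E q) ^ 2 +
          2 * ∑ q, d q * (X t q - t * η q) * Δ q + ∑ q, d q * (Δ q ^ 2 - 2 * E q * Δ q) := by
        simp only [hstep, mul_sum, ← sum_add_distrib]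
        exact sum_congr rfl fun q _ => by ring
    _ ≤ ∑ q, d q * (X t q - t * η q - E q) ^ 2 + 2 * ∑ q, d q * K q ^ 2 +
          ∑ q, d q * (K q ^ 2 + 2 * K q * |E q|) := by
        refine add_le_add (add_le_add le_rfl (mul_le_mul_of_nonneg_left ?_ zero_le_two))
          (sum_le_sum fun q _ => hnoise q)
        exact hdrift.trans (sum_le_sum fun q _ => mul_le_mul_of_nonneg_left (hSK q) (hd q))
    _ = ∑ q, d q * (X t q - t * η q - E q) ^ 2 +
          ∑ q, d q * (3 * K q ^ 2 + 2 * K q * |E q|) := by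
        rw [add_assoc, mul_sum, ← sum_add_distrib]
        exact congrArg _ (sum_congr rfl fun q _ => by ring)

theorem tendsto_div_of_isMaxWeight (h : IsQueueTrajectory A S σ X) (hA0 : ∀ t q, 0 ≤ A t q)
    (hρ : ∀ q, Tendsto (fun t : ℕ => (∑ s ∈ range t, A s q) / t) atTop (𝓝 (ρ q)))
    (hmw : IsMaxWeight S d σ X) (hα0 : ∀ m, 0 ≤ α m) (hα1 : ∑ m, α m = 1)
    (hη : ∀ q, η q = max (ρ q - ∑ m, α m * S m q) 0)
    (hαmax : ∀ m, 0 < α m → ∀ k, ∑ q, d q * η q * S k q ≤ ∑ q, d q * η q * S m q)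
    (hd : ∀ q, 0 < d q) :
    Tendsto (fun t q => X t q / t) atTop (𝓝 η) := by
  have hE : ∀ q, (fun t => arrivalExcess A ρ t q) =o[atTop] (fun t : ℕ => (t : ℝ)) :=
    fun q => tendsto_div_natCast_iff_isLittleO.1 (hρ q)
  have hconst : ∀ c : ℝ, (fun _ : ℕ => c) =o[atTop] (fun t : ℕ => (t : ℝ)) := fun c =>
    isLittleO_const_left.2 <| Or.inr <| tendsto_norm_atTop_atTop.comp tendsto_natCast_atTop_atTop
  have hg : (fun t => ∑ q, d q * (3 * (|ρ q - η q| + ∑ i, |S i q|) ^ 2 +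
      2 * (|ρ q - η q| + ∑ i, |S i q|) * |arrivalExcess A ρ t q|)) =o[atTop]
        (fun t : ℕ => (t : ℝ)) := by
    simpa only [Finset.sum_fn] using IsLittleO.sum (s := univ) fun q _ =>
      ((hconst _).add ((isLittleO_abs_left.2 (hE q)).const_mul_left _)).const_mul_left (d q)
  have hY := isLittleO_of_weighted_sq_succ_le
    (Y := fun t q => X t q - t * η q - arrivalExcess A ρ t q) hd
    (h.weighted_sq_succ_le hA0 hmw hα0 hα1 hη hαmax fun q => (hd q).le) hg
  refine tendsto_pi_nhds.2 fun q => tendsto_div_natCast_iff_isLittleO.2 ?_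
  refine ((hY q).add (hE q)).congr_left fun t => ?_
  simp only [arrivalExcess]
  ring

end Sufficiency

lemma tendsto_departures_div (h : IsQueueTrajectory A S σ X) {ρ η : ι → ℝ} {q : ι}
    (hρ : Tendsto (fun t : ℕ => (∑ s ∈ range t, A s q) / t) atTop (𝓝 (ρ q)))
    (hX : Tendsto (fun t : ℕ => X t q / t) atTop (𝓝 (η q))) :
    Tendsto (fun T : ℕ => (∑ t ∈ range T, min (S (σ t) q) (X t q)) / T) atTop
      (𝓝 (ρ q - η q)) :=
  (hρ.sub hX).congr fun T => by rw [h.eq_sum_sub_sum T q]; ring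

lemma eq_max_of_tendsto_empiricalFreq [Fintype κ] [DecidableEq κ] (h : IsQueueTrajectory A S σ X)
    (hA0 : ∀ t q, 0 ≤ A t q) {ρ η : ι → ℝ} {q : ι}
    (hρ : Tendsto (fun t : ℕ => (∑ s ∈ range t, A s q) / t) atTop (𝓝 (ρ q)))
    (hX : Tendsto (fun t : ℕ => X t q / t) atTop (𝓝 (η q))) {α : κ → ℝ} {φ : ℕ → ℕ}
    (hφ : StrictMono φ) (hα : Tendsto (fun k => empiricalFreq σ (φ k)) atTop (𝓝 α)) :
    η q = max (ρ q - ∑ m, α m * S m q) 0 := by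
  have hdep := (h.tendsto_departures_div hρ hX).comp hφ.tendsto_atTop
  have hserv : Tendsto (fun k => (∑ t ∈ range (φ k), S (σ t) q) / φ k) atTop
      (𝓝 (∑ m, α m * S m q)) :=
    (tendsto_finsetSum _ fun m _ => (tendsto_pi_nhds.1 hα m).mul_const (S m q)).congr
      fun k => sum_empiricalFreq_mul σ (φ k) (S · q)
  have hle : ρ q - η q ≤ ∑ m, α m * S m q := le_of_tendsto_of_tendsto' hdep hserv fun k =>
    div_le_div_of_nonneg_right (sum_le_sum fun t _ => min_le_left _ _) (Nat.cast_nonneg _)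
  have hη0 : 0 ≤ η q := ge_of_tendsto' hX fun t => div_nonneg (h.nonneg hA0 t q) t.cast_nonneg
  obtain hη | hη := hη0.eq_or_lt
  · rw [← hη, max_eq_right (by linarith)]
  -- a queue growing linearly is eventually never empty, so it is served at full rate
  have hXtop : Tendsto (fun t => X t q) atTop atTop :=
    (hX.pos_mul_atTop hη tendsto_natCast_atTop_atTop).congr'
      ((eventually_ne_atTop 0).mono fun t ht => div_mul_cancel₀ _ (Nat.cast_ne_zero.2 ht))
  have hfull : (fun t => S (σ t) q) =ᶠ[atTop] fun t => min (S (σ t) q) (X t q) := by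
    filter_upwards [hXtop.eventually_ge_atTop (∑ i, |S i q|)] with t ht
    refine (min_eq_left (le_trans ?_ ht)).symm
    exact (le_abs_self _).trans
      (single_le_sum (f := fun i => |S i q|) (fun i _ => abs_nonneg _) (mem_univ _))
  have hserv' :=
    ((tendsto_sum_range_div_sub_of_eventuallyEq hfull).comp hφ.tendsto_atTop).add hdep
  rw [zero_add] at hserv'
  have hμ := tendsto_nhds_unique hserv (hserv'.congr fun k => sub_add_cancel _ _)
  rw [hμ, sub_sub_cancel, max_eq_left hη0]

end IsQueueTrajectory

lemma IsMaxWeight.le_of_frequently [Fintype ι] {S : κ → ι → ℝ} {d : ι → ℝ} {σ : ℕ → κ}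
    {X : ℕ → ι → ℝ} (hmw : IsMaxWeight S d σ X) {η : ι → ℝ}
    (hX : Tendsto (fun t q => X t q / t) atTop (𝓝 η)) {m : κ} (hm : ∃ᶠ t in atTop, σ t = m)
    (k : κ) : ∑ q, d q * η q * S k q ≤ ∑ q, d q * η q * S m q := by
  have hclosed : IsClosed {y : ι → ℝ | ∑ q, d q * y q * S k q ≤ ∑ q, d q * y q * S m q} :=
    isClosed_le (by fun_prop) (by fun_prop)
  refine hclosed.mem_of_frequently_of_tendsto (hm.mono fun t ht => ?_) hX
  have hscale : ∀ j, ∑ q, d q * (X t q / t) * S j q = (∑ q, S j q * (d q * X t q)) / t :=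
    fun j => by rw [sum_div]; exact sum_congr rfl fun q _ => by ring
  simp only [Set.mem_ofPred_eq, hscale]
  exact div_le_div_of_nonneg_right (ht ▸ hmw t k) t.cast_nonneg

theorem stmt15_general {Q N : ℕ} (hN : 0 < N)
    (A : ℕ → Fin Q → ℝ)
    (hA0 : ∀ t q, 0 ≤ A t q)
    (ρ : Fin Q → ℝ)
    (hρ : ∀ q, Tendsto (fun t : ℕ => (∑ s ∈ Finset.range t, A s q) / (t : ℝ))
      atTop (𝓝 (ρ q)))
    (S : Fin N → Fin Q → ℝ)
    (η : Fin Q → ℝ) :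
    (∃ d : Fin Q → ℝ, (∀ q, 0 < d q) ∧
      ∀ (σ : ℕ → Fin N) (X : ℕ → Fin Q → ℝ),
        (∀ q, X 0 q = 0) →
        (∀ t q, X (t + 1) q = X t q + A t q - min (S (σ t) q) (X t q)) →
        (∀ t j, ∑ q, S j q * (d q * X t q) ≤ ∑ q, S (σ t) q * (d q * X t q)) →
        Tendsto (fun t : ℕ => fun q => X t q / (t : ℝ)) atTop (𝓝 η)) ↔
    (∃ α : Fin N → ℝ, (∀ m, 0 ≤ α m) ∧ (∑ m, α m) = 1 ∧
      (∀ q, η q = max (ρ q - ∑ m, α m * S m q) 0) ∧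
      ∃ v : Fin Q → ℝ, (∀ q, 0 ≤ v q) ∧ (∀ q, v q = 0 ↔ η q = 0) ∧
        ∀ m, 0 < α m → ∀ k, ∑ q, v q * S k q ≤ ∑ q, v q * S m q) := by
  constructor
  · rintro ⟨d, hd, hlim⟩
    have : Nonempty (Fin N) := Fin.pos_iff_nonempty.1 hN
    obtain ⟨σ, X, htraj, hmw⟩ := exists_isQueueTrajectory_isMaxWeight A S d
    have hX := hlim σ X htraj.1 htraj.2 hmw
    obtain ⟨α, ⟨hα0, hα1⟩, φ, hφ, hfreq⟩ := exists_tendsto_empiricalFreq σ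
    have hη : ∀ q, η q = max (ρ q - ∑ m, α m * S m q) 0 := fun q =>
      htraj.eq_max_of_tendsto_empiricalFreq hA0 (hρ q) (tendsto_pi_nhds.1 hX q) hφ hfreq
    refine ⟨α, hα0, hα1, hη, fun q => d q * η q, fun q => ?_, fun q => ?_, fun m hm =>
      hmw.le_of_frequently hX (frequently_eq_of_tendsto_empiricalFreq hφ
        (tendsto_pi_nhds.1 hfreq m) hm)⟩
    · exact mul_nonneg (hd q).le ((hη q).trans_ge (le_max_right _ _))
    · simp [(hd q).ne']
  · rintro ⟨α, hα0, hα1, hη, v, hv0, hv, hvmax⟩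
    obtain ⟨d, hd, rfl⟩ := exists_pos_mul_eq_of_eq_zero_iff hv0
      (fun q => (hη q).trans_ge (le_max_right _ _)) hv
    exact ⟨d, hd, fun σ X hX0 hXrec hmw => IsQueueTrajectory.tendsto_div_of_isMaxWeight
      ⟨hX0, hXrec⟩ hA0 hρ hmw hα0 hα1 hη hvmax hd⟩

/-- in overload, there exists a MaxWeight matrix D steering X(t)/t → η
iff η is of the form (ρ − Σ α_m S_m)⁺ with α ≥ 0 summing to 1, and there exists v ≥ 0,
with v_q = 0 iff η_q = 0, such that every S_m with α_m > 0 maximizes ⟨v, ·⟩ over 𝒮. -/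
theorem stmt15 {Q N : ℕ} (hQ : 0 < Q) (hN : 0 < N)
    (A : ℕ → Fin Q → ℝ) (Abar : Fin Q → ℝ)
    (hA0 : ∀ t q, 0 ≤ A t q) (hAbar : ∀ t q, A t q ≤ Abar q)
    (ρ : Fin Q → ℝ) (hρpos : ∀ q, 0 < ρ q)
    (hρ : ∀ q, Tendsto (fun t : ℕ => (∑ s ∈ Finset.range t, A s q) / (t : ℝ))
      atTop (𝓝 (ρ q)))
    (S : Fin N → Fin Q → ℝ) (hS : ∀ i q, 0 ≤ S i q)
    (hover : ρ ∉ stabRegion S)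
    (η : Fin Q → ℝ) (hη : ∀ q, 0 ≤ η q) :
    (∃ d : Fin Q → ℝ, (∀ q, 0 < d q) ∧
      ∀ (σ : ℕ → Fin N) (X : ℕ → Fin Q → ℝ),
        (∀ q, X 0 q = 0) →
        (∀ t q, X (t + 1) q = X t q + A t q - min (S (σ t) q) (X t q)) →
        (∀ t j, ∑ q, S j q * (d q * X t q) ≤ ∑ q, S (σ t) q * (d q * X t q)) →
        Tendsto (fun t : ℕ => fun q => X t q / (t : ℝ)) atTop (𝓝 η)) ↔
    (∃ α : Fin N → ℝ, (∀ m, 0 ≤ α m) ∧ (∑ m, α m) = 1 ∧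
      (∀ q, η q = max (ρ q - ∑ m, α m * S m q) 0) ∧
      ∃ v : Fin Q → ℝ, (∀ q, 0 ≤ v q) ∧ (∀ q, v q = 0 ↔ η q = 0) ∧
        ∀ m, 0 < α m → ∀ k, ∑ q, v q * S k q ≤ ∑ q, v q * S m q) :=
  stmt15_general hN A hA0 ρ hρ S η
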